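/- For every parameter p with 0.709637 ≤ p ≤ 0.719023, writing p_i = α_p^i(p), the following chain of strict inequalities holds: 1/2 < p₉ < p₅ < p₃ < p₇ < p₁ < p₂ < 2/3 < p₈ < p₄ < p₆ < p. -/

import Mathlib

/-!
Every iterate of `α_p` stays `≥ 1/2`, and for `p` in the given range the orbit visits the branches
in the order right, left, left, left, right, left, right, left, right. Along a fixed itinerary the
orbit is a continued fraction `p_{n+1} = c ± γ / p_n`, so `p_n = K_{n+1} / K_n` for its continuants
`K_n`, and each comparison of iterates becomes a polynomial inequality in `p`. The left branch is
decreasing and the right one increasing, so an order between two iterates on the same branch passes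
to their images; only nine polynomial inequalities remain, each certified on the whole range by a
positive constant plus an expansion in the Bernstein basis `(p - a)^k (b - p)^(n-k)` of `[a, b]`
with positive coefficients.
-/

noncomputable section

/-- The folded belief dynamics `α_p : [1/2, 1] → ℝ`:
`α_p(t) = 2 - 3p + γ/t` if `t < 2/3` and `α_p(t) = 3p - 1 - γ/t` if `t ≥ 2/3`,
where `γ = 2p - 1`. -/
def alphaMap (p t : ℝ) : ℝ :=
  if t < 2/3 then 2 - 3*p + (2*p - 1)/t else 3*p - 1 - (2*p - 1)/t

open Function Set

variable {p t : ℝ}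

theorem alphaMap_of_lt (ht : t < 2 / 3) : alphaMap p t = 2 - 3 * p + (2 * p - 1) / t :=
  if_pos ht

theorem alphaMap_of_le (ht : 2 / 3 ≤ t) : alphaMap p t = 3 * p - 1 - (2 * p - 1) / t :=
  if_neg ht.not_gt

theorem mapsTo_alphaMap (hp : 1 / 2 ≤ p) : MapsTo (alphaMap p) (Ici (1 / 2)) (Ici (1 / 2)) := by
  intro t (ht : 1 / 2 ≤ t)
  have hγ : 0 ≤ 2 * p - 1 := by linarith
  by_cases h : t < 2 / 3
  · have : (2 * p - 1) * (3 / 2) ≤ (2 * p - 1) / t := by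
      rw [le_div_iff₀ (by linarith)]; nlinarith
    simp only [mem_Ici, alphaMap_of_lt h]
    linarith
  · have : (2 * p - 1) / t ≤ (2 * p - 1) * (3 / 2) := by
      rw [div_le_iff₀ (by linarith)]; nlinarith
    simp only [mem_Ici, alphaMap_of_le (not_lt.1 h)]
    linarith

theorem half_le_iterate_alphaMap (hp : 1 / 2 ≤ p) (n : ℕ) : 1 / 2 ≤ (alphaMap p)^[n] p :=
  (mapsTo_alphaMap hp).iterate n hp

theorem alphaMap_strictAntiOn (hp : 1 / 2 < p) : StrictAntiOn (alphaMap p) (Ioo 0 (2 / 3)) := by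
  intro s ⟨hs, _⟩ t ⟨_, ht⟩ hst
  rw [alphaMap_of_lt ht, alphaMap_of_lt (hst.trans ht)]
  have := div_lt_div_of_pos_left (by linarith : 0 < 2 * p - 1) hs hst
  linarith

theorem alphaMap_strictMonoOn (hp : 1 / 2 < p) : StrictMonoOn (alphaMap p) (Ici (2 / 3)) := by
  intro s (hs : 2 / 3 ≤ s) t _ hst
  rw [alphaMap_of_le hs, alphaMap_of_le (hs.trans hst.le)]
  have := div_lt_div_of_pos_left (by linarith : 0 < 2 * p - 1) (by linarith) hst
  linarith

theorem iterate_succ_alphaMap_lt_of_lt_twoThirds (hp : 1 / 2 < p) {i j : ℕ}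
    (hj : (alphaMap p)^[j] p < 2 / 3) (hij : (alphaMap p)^[i] p < (alphaMap p)^[j] p) :
    (alphaMap p)^[j + 1] p < (alphaMap p)^[i + 1] p := by
  have hi : 0 < (alphaMap p)^[i] p := by linarith [half_le_iterate_alphaMap hp.le i]
  simp only [iterate_succ_apply']
  exact alphaMap_strictAntiOn hp ⟨hi, hij.trans hj⟩ ⟨hi.trans hij, hj⟩ hij

theorem iterate_succ_alphaMap_lt_of_twoThirds_le (hp : 1 / 2 < p) {i j : ℕ}
    (hi : 2 / 3 ≤ (alphaMap p)^[i] p) (hij : (alphaMap p)^[i] p < (alphaMap p)^[j] p) :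
    (alphaMap p)^[i + 1] p < (alphaMap p)^[j + 1] p := by
  simp only [iterate_succ_apply']
  exact alphaMap_strictMonoOn hp hi (mem_Ici.2 (hi.trans hij.le)) hij

/-- The numerators of the continued fraction `p_{n+1} = (2 - 3p) + γ / p_n` (when `s n`, left
branch) or `p_{n+1} = (3p - 1) - γ / p_n` (otherwise, right branch). -/
def continuant (s : ℕ → Bool) (p : ℝ) : ℕ → ℝ
  | 0 => 1
  | 1 => p
  | n + 2 => if s n then (2 - 3 * p) * continuant s p (n + 1) + (2 * p - 1) * continuant s p n
      else (3 * p - 1) * continuant s p (n + 1) - (2 * p - 1) * continuant s p n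

def FollowsItinerary (s : ℕ → Bool) (p : ℝ) (n : ℕ) : Prop :=
  ∀ k < n, ((alphaMap p)^[k] p < 2 / 3 ↔ s k)

namespace FollowsItinerary

variable {s : ℕ → Bool} {m n k : ℕ}

theorem zero : FollowsItinerary s p 0 := fun _ hk => absurd hk (Nat.not_lt_zero _)

theorem mono (h : FollowsItinerary s p n) (hmn : m ≤ n) : FollowsItinerary s p m :=
  fun k hk => h k (hk.trans_le hmn)

theorem succ_of_lt (h : FollowsItinerary s p n) (hs : s n) (hx : (alphaMap p)^[n] p < 2 / 3) :
    FollowsItinerary s p (n + 1) := by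
  intro k hk
  rcases Nat.lt_succ_iff_lt_or_eq.1 hk with hk | rfl
  exacts [h k hk, iff_of_true hx hs]

theorem succ_of_le (h : FollowsItinerary s p n) (hs : s n = false)
    (hx : 2 / 3 ≤ (alphaMap p)^[n] p) : FollowsItinerary s p (n + 1) := by
  intro k hk
  rcases Nat.lt_succ_iff_lt_or_eq.1 hk with hk | rfl
  exacts [h k hk, iff_of_false hx.not_gt (by simp [hs])]

theorem lt_twoThirds (h : FollowsItinerary s p n) (hk : k < n) (hs : s k) :
    (alphaMap p)^[k] p < 2 / 3 :=
  (h k hk).2 hs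

theorem twoThirds_le (h : FollowsItinerary s p n) (hk : k < n) (hs : s k = false) :
    2 / 3 ≤ (alphaMap p)^[k] p :=
  not_lt.1 fun hx => by simpa [hs] using (h k hk).1 hx

theorem iterate_mul_continuant (hp : 1 / 2 ≤ p) (h : FollowsItinerary s p n) :
    (alphaMap p)^[n] p * continuant s p n = continuant s p (n + 1) := by
  induction n with
  | zero => simp [continuant]
  | succ n ih =>
    have hx : (alphaMap p)^[n] p ≠ 0 := by linarith [half_le_iterate_alphaMap hp n]
    rw [iterate_succ_apply', continuant, ← ih (h.mono n.le_succ)]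
    cases hs : s n
    · rw [if_neg (by simp), alphaMap_of_le (h.twoThirds_le n.lt_succ_self hs)]
      field_simp
    · rw [if_pos rfl, alphaMap_of_lt (h.lt_twoThirds n.lt_succ_self hs)]
      field_simp

theorem continuant_pos (hp : 1 / 2 ≤ p) (h : FollowsItinerary s p n) (hk : k ≤ n) :
    0 < continuant s p k := by
  induction k with
  | zero => simp [continuant]
  | succ k ih =>
    rw [← (h.mono (k.le_succ.trans hk)).iterate_mul_continuant hp]
    exact mul_pos (by linarith [half_le_iterate_alphaMap hp k]) (ih (k.le_succ.trans hk))

theorem iterate_eq_div (hp : 1 / 2 ≤ p) (h : FollowsItinerary s p n) :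
    (alphaMap p)^[n] p = continuant s p (n + 1) / continuant s p n := by
  rw [← h.iterate_mul_continuant hp, mul_div_cancel_right₀ _ (h.continuant_pos hp le_rfl).ne']

theorem iterate_lt_iterate_iff (hp : 1 / 2 ≤ p) (h : FollowsItinerary s p n) {i j : ℕ}
    (hi : i ≤ n) (hj : j ≤ n) :
    (alphaMap p)^[i] p < (alphaMap p)^[j] p ↔
      continuant s p (i + 1) * continuant s p j < continuant s p (j + 1) * continuant s p i := by
  rw [(h.mono hi).iterate_eq_div hp, (h.mono hj).iterate_eq_div hp,
    div_lt_div_iff₀ (h.continuant_pos hp hi) (h.continuant_pos hp hj)]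

theorem iterate_lt_iff (hp : 1 / 2 ≤ p) (h : FollowsItinerary s p n) {c : ℝ} :
    (alphaMap p)^[n] p < c ↔ continuant s p (n + 1) < c * continuant s p n := by
  rw [h.iterate_eq_div hp, div_lt_iff₀ (h.continuant_pos hp le_rfl)]

theorem lt_iterate_iff (hp : 1 / 2 ≤ p) (h : FollowsItinerary s p n) {c : ℝ} :
    c < (alphaMap p)^[n] p ↔ c * continuant s p n < continuant s p (n + 1) := by
  rw [h.iterate_eq_div hp, lt_div_iff₀ (h.continuant_pos hp le_rfl)]

end FollowsItinerary

def secondRangeItinerary : ℕ → Bool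
  | 1 | 2 | 3 | 5 | 7 => true
  | _ => false

section SecondRange

local notation "K" => continuant secondRangeItinerary

theorem iterate_one_lt_twoThirds (hu : 0 ≤ p - 709637 / 1000000) (hv : 0 ≤ 719023 / 1000000 - p)
    (h : FollowsItinerary secondRangeItinerary p 1) : (alphaMap p)^[1] p < 2 / 3 := by
  rw [h.iterate_lt_iff (by linarith), ← sub_pos]
  have key : 2 / 3 * K p 1 - K p 2 =
      1 / 10 ^ 2 +
      243744954079/264290988 * (719023 / 1000000 - p) ^ 2 +
      78474026047/44048498 * (p - 709637 / 1000000) * (719023 / 1000000 - p) +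
      226306329239/264290988 * (p - 709637 / 1000000) ^ 2 := by
    simp only [continuant, secondRangeItinerary, Bool.false_eq_true, ↓reduceIte]
    ring
  rw [key]
  positivity

theorem iterate_two_lt_twoThirds (hu : 0 ≤ p - 709637 / 1000000) (hv : 0 ≤ 719023 / 1000000 - p)
    (h : FollowsItinerary secondRangeItinerary p 2) : (alphaMap p)^[2] p < 2 / 3 := by
  rw [h.iterate_lt_iff (by linarith), ← sub_pos]
  have key : 2 / 3 * K p 2 - K p 3 =
      1 / 10 ^ 3 +
      1212330372209387/190818093336 * (719023 / 1000000 - p) ^ 3 +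
      1434472543674273/63606031112 * (p - 709637 / 1000000) * (719023 / 1000000 - p) ^ 2 +
      1684807102420867/63606031112 * (p - 709637 / 1000000) ^ 2 * (719023 / 1000000 - p) +
      1965051411289193/190818093336 * (p - 709637 / 1000000) ^ 3 := by
    simp only [continuant, secondRangeItinerary, Bool.false_eq_true, ↓reduceIte]
    ring
  rw [key]
  positivity

theorem iterate_one_lt_iterate_two (hu : 0 ≤ p - 709637 / 1000000) (hv : 0 ≤ 719023 / 1000000 - p)
    (h : FollowsItinerary secondRangeItinerary p 2) : (alphaMap p)^[1] p < (alphaMap p)^[2] p := by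
  rw [h.iterate_lt_iterate_iff (by linarith) (by norm_num) le_rfl, ← sub_pos]
  have key : K p 3 * K p 1 - K p 2 * K p 2 =
      1 / 10 ^ 2 +
      10202433223689237195751/3880540352112008 * (719023 / 1000000 - p) ^ 4 +
      9808753649109133451429/970135088028002 * (p - 709637 / 1000000) * (719023 / 1000000 - p) ^ 3 +
      28137848293295091661373/1940270176056004 *
        (p - 709637 / 1000000) ^ 2 * (719023 / 1000000 - p) ^ 2 +
      8912357111083697020589/970135088028002 * (p - 709637 / 1000000) ^ 3 * (719023 / 1000000 - p) +
      8406243380765563353431/3880540352112008 * (p - 709637 / 1000000) ^ 4 := by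
    simp only [continuant, secondRangeItinerary, Bool.false_eq_true, ↓reduceIte]
    ring
  rw [key]
  positivity

theorem twoThirds_lt_iterate_four (hu : 0 ≤ p - 709637 / 1000000) (hv : 0 ≤ 719023 / 1000000 - p)
    (h : FollowsItinerary secondRangeItinerary p 4) : 2 / 3 < (alphaMap p)^[4] p := by
  rw [h.lt_iterate_iff (by linarith), ← sub_pos]
  have key : K p 5 - 2 / 3 * K p 4 =
      1 / 10 ^ 3 +
      3618186104112172348899614449/218536510469539842528 * (719023 / 1000000 - p) ^ 5 +
      16820760643790857510953121855/218536510469539842528 *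
        (p - 709637 / 1000000) * (719023 / 1000000 - p) ^ 4 +
      15123279010620377324264822045/109268255234769921264 *
        (p - 709637 / 1000000) ^ 2 * (719023 / 1000000 - p) ^ 3 +
      12965835316639239972448936055/109268255234769921264 *
        (p - 709637 / 1000000) ^ 3 * (719023 / 1000000 - p) ^ 2 +
      10313907215270927704535963845/218536510469539842528 *
        (p - 709637 / 1000000) ^ 4 * (719023 / 1000000 - p) +
      1426202362097169213386983651/218536510469539842528 * (p - 709637 / 1000000) ^ 5 := by
    simp only [continuant, secondRangeItinerary, Bool.false_eq_true, ↓reduceIte]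
    ring
  rw [key]
  positivity

theorem iterate_five_lt_iterate_three (hu : 0 ≤ p - 709637 / 1000000)
    (hv : 0 ≤ 719023 / 1000000 - p) (h : FollowsItinerary secondRangeItinerary p 5) :
    (alphaMap p)^[5] p < (alphaMap p)^[3] p := by
  rw [h.iterate_lt_iterate_iff (by linarith) le_rfl (by norm_num), ← sub_pos]
  have key : K p 4 * K p 5 - K p 6 * K p 3 =
      1 / 10 ^ 10 +
      15070539439281275841001360961033770320845677/21744608904789683673494920731740416 *
        (719023 / 1000000 - p) ^ 9 +
      8784375525057437689284744467561183979132840951647/21744608904789683673494920731740416 *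
        (p - 709637 / 1000000) * (719023 / 1000000 - p) ^ 8 +
      18343635195400789203711293291155415560205805658813/5436152226197420918373730182935104 *
        (p - 709637 / 1000000) ^ 2 * (719023 / 1000000 - p) ^ 7 +
      66992949428239488427773855798186821247915178311563/5436152226197420918373730182935104 *
        (p - 709637 / 1000000) ^ 3 * (719023 / 1000000 - p) ^ 6 +
      279450101341000766549818099787408007655298312427331/10872304452394841836747460365870208 *
        (p - 709637 / 1000000) ^ 4 * (719023 / 1000000 - p) ^ 5 +
      364064250154207196010437359214242954959537122614249/10872304452394841836747460365870208 *
        (p - 709637 / 1000000) ^ 5 * (719023 / 1000000 - p) ^ 4 +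
      151690685318722157571398969900866312291042725262857/5436152226197420918373730182935104 *
        (p - 709637 / 1000000) ^ 6 * (719023 / 1000000 - p) ^ 3 +
      78961416618650644083500852360679472124094286450887/5436152226197420918373730182935104 *
        (p - 709637 / 1000000) ^ 7 * (719023 / 1000000 - p) ^ 2 +
      93899966305704230348527921659610291492647246902773/21744608904789683673494920731740416 *
        (p - 709637 / 1000000) ^ 8 * (719023 / 1000000 - p) +
      939009699508424550405628415074926544037133729251/1672662223445360282576532363980032 *
        (p - 709637 / 1000000) ^ 9 := by
    simp only [continuant, secondRangeItinerary, Bool.false_eq_true, ↓reduceIte]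
    ring
  rw [key]
  positivity

theorem iterate_six_lt (hu : 0 ≤ p - 709637 / 1000000) (hv : 0 ≤ 719023 / 1000000 - p)
    (h : FollowsItinerary secondRangeItinerary p 6) : (alphaMap p)^[6] p < p := by
  rw [h.iterate_lt_iff (by linarith), ← sub_pos]
  have key : p * K p 6 - K p 7 =
      1 / 10 ^ 4 +
      265853870609678611546998004135301790281/1604367507390750802419153824 *
        (719023 / 1000000 - p) ^ 7 +
      1831200671355328292815598201698531376093/1604367507390750802419153824 *
        (p - 709637 / 1000000) * (719023 / 1000000 - p) ^ 6 +
      5362298567179501968466786909634631659941/1604367507390750802419153824 *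
        (p - 709637 / 1000000) ^ 2 * (719023 / 1000000 - p) ^ 5 +
      8642023324197055058775324548427910119065/1604367507390750802419153824 *
        (p - 709637 / 1000000) ^ 3 * (719023 / 1000000 - p) ^ 4 +
      8263821041239878903787450686362802342635/1604367507390750802419153824 *
        (p - 709637 / 1000000) ^ 4 * (719023 / 1000000 - p) ^ 3 +
      4677216165022013449073948685050184220999/1604367507390750802419153824 *
        (p - 709637 / 1000000) ^ 5 * (719023 / 1000000 - p) ^ 2 +
      1445796366497381683122756912235932965607/1604367507390750802419153824 *
        (p - 709637 / 1000000) ^ 6 * (719023 / 1000000 - p) +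
      187329683392599149075311297240625525379/1604367507390750802419153824 *
        (p - 709637 / 1000000) ^ 7 := by
    simp only [continuant, secondRangeItinerary, Bool.false_eq_true, ↓reduceIte]
    ring
  rw [key]
  positivity

theorem iterate_three_lt_iterate_seven (hu : 0 ≤ p - 709637 / 1000000)
    (hv : 0 ≤ 719023 / 1000000 - p) (h : FollowsItinerary secondRangeItinerary p 7) :
    (alphaMap p)^[3] p < (alphaMap p)^[7] p := by
  rw [h.iterate_lt_iterate_iff (by linarith) (by norm_num) le_rfl, ← sub_pos]
  have key : K p 8 * K p 3 - K p 4 * K p 7 =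
      1 / 10 ^ 11 +
      30788068235524282980307214400983143284503526611935335721/24903251408188674864526915390417882518074368 *
        (719023 / 1000000 - p) ^ 11 +
      16619054033288974135143806429759399713269916169308036869356649/24903251408188674864526915390417882518074368 *
        (p - 709637 / 1000000) * (719023 / 1000000 - p) ^ 10 +
      176098351796211415845026099116581841922284520753287416917390855/24903251408188674864526915390417882518074368 *
        (p - 709637 / 1000000) ^ 2 * (719023 / 1000000 - p) ^ 9 +
      839139596498264149066302956133858541353296407301215688771919135/24903251408188674864526915390417882518074368 *
        (p - 709637 / 1000000) ^ 3 * (719023 / 1000000 - p) ^ 8 +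
      1184024862406903423198970564350489839293286280948064785845895165/12451625704094337432263457695208941259037184 *
        (p - 709637 / 1000000) ^ 4 * (719023 / 1000000 - p) ^ 7 +
      2191361102037530149330836573978841113228188572258809894993250349/12451625704094337432263457695208941259037184 *
        (p - 709637 / 1000000) ^ 5 * (719023 / 1000000 - p) ^ 6 +
      2779350754368276062859248630364776843278928258467677022289850471/12451625704094337432263457695208941259037184 *
        (p - 709637 / 1000000) ^ 6 * (719023 / 1000000 - p) ^ 5 +
      2446522111086294635343204337647896343074851280949498254420025935/12451625704094337432263457695208941259037184 *
        (p - 709637 / 1000000) ^ 7 * (719023 / 1000000 - p) ^ 4 +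
      2951702770653517781965800706091692222264966064511982907958612365/24903251408188674864526915390417882518074368 *
        (p - 709637 / 1000000) ^ 8 * (719023 / 1000000 - p) ^ 3 +
      1167845450796596543537277334093789897704577086375269351757414445/24903251408188674864526915390417882518074368 *
        (p - 709637 / 1000000) ^ 9 * (719023 / 1000000 - p) ^ 2 +
      273658892878105228032525972079772592503818461391854650174955131/24903251408188674864526915390417882518074368 *
        (p - 709637 / 1000000) ^ 10 * (719023 / 1000000 - p) +
      28840752090461417055873292359536954474867034539362620516971859/24903251408188674864526915390417882518074368 *
        (p - 709637 / 1000000) ^ 11 := by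
    simp only [continuant, secondRangeItinerary, Bool.false_eq_true, ↓reduceIte]
    ring
  rw [key]
  positivity

theorem twoThirds_lt_iterate_eight (hu : 0 ≤ p - 709637 / 1000000) (hv : 0 ≤ 719023 / 1000000 - p)
    (h : FollowsItinerary secondRangeItinerary p 8) : 2 / 3 < (alphaMap p)^[8] p := by
  rw [h.lt_iterate_iff (by linarith), ← sub_pos]
  have key : K p 9 - 2 / 3 * K p 8 =
      1 / 10 ^ 8 +
      823612006714030804112429147939772433330724444444209/1696079494573595326532603817075752448 *
        (719023 / 1000000 - p) ^ 9 +
      6953309908017785280656289887826317681328435972842699/1696079494573595326532603817075752448 *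
        (p - 709637 / 1000000) * (719023 / 1000000 - p) ^ 8 +
      6417808765648677213548687640368884244344943309581121/424019873643398831633150954268938112 *
        (p - 709637 / 1000000) ^ 2 * (719023 / 1000000 - p) ^ 7 +
      13533850874309650987813783256486876146299276243952871/424019873643398831633150954268938112 *
        (p - 709637 / 1000000) ^ 3 * (719023 / 1000000 - p) ^ 6 +
      35660892490806667247893991125934237134534638652497727/848039747286797663266301908537876224 *
        (p - 709637 / 1000000) ^ 4 * (719023 / 1000000 - p) ^ 5 +
      10019041885045635159140087040474040186109862561455711/282679915762265887755433969512625408 *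
        (p - 709637 / 1000000) ^ 5 * (719023 / 1000000 - p) ^ 4 +
      7913983873384442443757423858821961078887735237254269/424019873643398831633150954268938112 *
        (p - 709637 / 1000000) ^ 6 * (719023 / 1000000 - p) ^ 3 +
      793532243605295749112880723199288608614376974084593/141339957881132943877716984756312704 *
        (p - 709637 / 1000000) ^ 7 * (719023 / 1000000 - p) ^ 2 +
      1252794445755995245545962529175243692784257069124441/1696079494573595326532603817075752448 *
        (p - 709637 / 1000000) ^ 8 * (719023 / 1000000 - p) +
      10351410962021000408731799964587913898987690771/1696079494573595326532603817075752448 *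
        (p - 709637 / 1000000) ^ 9 := by
    simp only [continuant, secondRangeItinerary, Bool.false_eq_true, ↓reduceIte]
    ring
  rw [key]
  positivity

theorem half_lt_iterate_nine (hu : 0 ≤ p - 709637 / 1000000) (hv : 0 ≤ 719023 / 1000000 - p)
    (h : FollowsItinerary secondRangeItinerary p 9) : 1 / 2 < (alphaMap p)^[9] p := by
  rw [h.lt_iterate_iff (by linarith), ← sub_pos]
  have key : K p 10 - 1 / 2 * K p 9 =
      1 / 10 ^ 9 +
      172664839361509275681717309286650073606153080359950642133/5306467378689255244945006475691004158976 *
        (719023 / 1000000 - p) ^ 10 +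
      819057087206825810845029606241729268713022296017164439035/2653233689344627622472503237845502079488 *
        (p - 709637 / 1000000) * (719023 / 1000000 - p) ^ 9 +
      6904816044970946365592007503557430722844561554442556315385/5306467378689255244945006475691004158976 *
        (p - 709637 / 1000000) ^ 2 * (719023 / 1000000 - p) ^ 8 +
      2121502416268161266737696146798326694265451946223966941305/663308422336156905618125809461375519872 *
        (p - 709637 / 1000000) ^ 3 * (719023 / 1000000 - p) ^ 7 +
      13404858942093082678454629118038525818554250804752245325165/2653233689344627622472503237845502079488 *
        (p - 709637 / 1000000) ^ 4 * (719023 / 1000000 - p) ^ 6 +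
      7056162737189942067102718449543531753701859967486841160721/1326616844672313811236251618922751039744 *
        (p - 709637 / 1000000) ^ 5 * (719023 / 1000000 - p) ^ 5 +
      9901902602984439169544967982580956020436597587257688951765/2653233689344627622472503237845502079488 *
        (p - 709637 / 1000000) ^ 6 * (719023 / 1000000 - p) ^ 4 +
      1116285116619165446114706587169375089756752436008828613705/663308422336156905618125809461375519872 *
        (p - 709637 / 1000000) ^ 7 * (719023 / 1000000 - p) ^ 3 +
      2348501967148901865585924642376044029118773555139198189585/5306467378689255244945006475691004158976 *
        (p - 709637 / 1000000) ^ 8 * (719023 / 1000000 - p) ^ 2 +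
      137224196625777595930838018167949287820596189066686300635/2653233689344627622472503237845502079488 *
        (p - 709637 / 1000000) ^ 9 * (719023 / 1000000 - p) +
      7837887083134725572521665023643938665897980995736733/5306467378689255244945006475691004158976 *
        (p - 709637 / 1000000) ^ 10 := by
    simp only [continuant, secondRangeItinerary, Bool.false_eq_true, ↓reduceIte]
    ring
  rw [key]
  positivity

theorem followsItinerary_secondRange (hu : 0 ≤ p - 709637 / 1000000)
    (hv : 0 ≤ 719023 / 1000000 - p) : FollowsItinerary secondRangeItinerary p 9 := by
  have hp : 1 / 2 < p := by linarith
  have h1 := (FollowsItinerary.zero (s := secondRangeItinerary)).succ_of_le rfl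
    (show 2 / 3 ≤ (alphaMap p)^[0] p by rw [iterate_zero_apply]; linarith)
  have h2 := h1.succ_of_lt rfl (iterate_one_lt_twoThirds hu hv h1)
  have h3 := h2.succ_of_lt rfl (iterate_two_lt_twoThirds hu hv h2)
  have h4 := h3.succ_of_lt rfl <| (iterate_succ_alphaMap_lt_of_lt_twoThirds hp
    (h3.lt_twoThirds (by norm_num) rfl) (iterate_one_lt_iterate_two hu hv h2)).trans
    (h3.lt_twoThirds (by norm_num) rfl)
  have h5 := h4.succ_of_le rfl (twoThirds_lt_iterate_four hu hv h4).le
  have h6 := h5.succ_of_lt rfl <|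
    (iterate_five_lt_iterate_three hu hv h5).trans (h4.lt_twoThirds (by norm_num) rfl)
  have h7 := h6.succ_of_le rfl <| (twoThirds_lt_iterate_four hu hv h4).le.trans
    (iterate_succ_alphaMap_lt_of_lt_twoThirds hp (h4.lt_twoThirds (by norm_num) rfl)
      (iterate_five_lt_iterate_three hu hv h5)).le
  have h8 := h7.succ_of_lt rfl <| (iterate_succ_alphaMap_lt_of_twoThirds_le (j := 0) hp
    (h7.twoThirds_le (by norm_num) rfl) (iterate_six_lt hu hv h6)).trans
    (h2.lt_twoThirds (by norm_num) rfl)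
  exact h8.succ_of_le rfl (twoThirds_lt_iterate_eight hu hv h8).le

end SecondRange

/-- For `0.709637 ≤ p ≤ 0.719023`, with `p_i = α_p^i(p)`, the ordering
`1/2 < p₉ < p₅ < p₃ < p₇ < p₁ < p₂ < 2/3 < p₈ < p₄ < p₆ < p` holds. -/
theorem iterate_ordering_second_range (p : ℝ) (hp : 0.709637 ≤ p) (hp1 : p ≤ 0.719023) :
    1/2 < (alphaMap p)^[9] p ∧
    (alphaMap p)^[9] p < (alphaMap p)^[5] p ∧
    (alphaMap p)^[5] p < (alphaMap p)^[3] p ∧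
    (alphaMap p)^[3] p < (alphaMap p)^[7] p ∧
    (alphaMap p)^[7] p < (alphaMap p)^[1] p ∧
    (alphaMap p)^[1] p < (alphaMap p)^[2] p ∧
    (alphaMap p)^[2] p < 2/3 ∧
    2/3 < (alphaMap p)^[8] p ∧
    (alphaMap p)^[8] p < (alphaMap p)^[4] p ∧
    (alphaMap p)^[4] p < (alphaMap p)^[6] p ∧
    (alphaMap p)^[6] p < p := by
  have hu : 0 ≤ p - 709637 / 1000000 := by norm_num at hp; linarith
  have hv : 0 ≤ 719023 / 1000000 - p := by norm_num at hp1; linarith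
  have hp' : 1 / 2 < p := by linarith
  have h := followsItinerary_secondRange hu hv
  have h53 := iterate_five_lt_iterate_three hu hv (h.mono (by norm_num))
  have h60 := iterate_six_lt hu hv (h.mono (by norm_num))
  have h37 := iterate_three_lt_iterate_seven hu hv (h.mono (by norm_num))
  have h8 := twoThirds_lt_iterate_eight hu hv (h.mono (by norm_num))
  have h84 := iterate_succ_alphaMap_lt_of_lt_twoThirds hp' (h.lt_twoThirds (by norm_num) rfl) h37
  refine ⟨half_lt_iterate_nine hu hv h, iterate_succ_alphaMap_lt_of_twoThirds_le hp' h8.le h84,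
    h53, h37, ?_, iterate_one_lt_iterate_two hu hv (h.mono (by norm_num)),
    h.lt_twoThirds (by norm_num) rfl, h8, h84,
    iterate_succ_alphaMap_lt_of_lt_twoThirds hp' (h.lt_twoThirds (by norm_num) rfl) h53, h60⟩
  exact iterate_succ_alphaMap_lt_of_twoThirds_le (j := 0) hp' (h.twoThirds_le (by norm_num) rfl) h60
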